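/- The dimension of the standard module S_0(2m) of the affine symmetric TL algebra b^φ_{2m} (the module labelled l = 0, i.e. with no propagating lines) equals 2^m. -/

import Mathlib

/-!
STATEMENT 17.
The standard module `S₀(2m)` of the affine symmetric (symplectic blob) TL algebra
`b^φ_{2m}` has basis the set of upper half diagrams with no propagating lines; such a
half diagram is determined by a free binary (left/right) choice at each of the `m`
vertices of the fundamental domain.  Hence any `k`-vector space with basis indexed by
these half diagrams (e.g. `S₀(2m)`) has dimension `2^m`, and the number of such half
diagrams is `2^m`.
-/

/-- Destination of the line leaving a northern vertex of an affine symmetric half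
diagram (drawn in the fundamental strip between the `0`-wall and the `1`-wall):
it either forms a cup with another northern vertex (`pt j`), exits through the
`0`-wall (`wall0`), exits through the `1`-wall (`wall1`), or propagates to the
southern edge (`prop`). -/
inductive HDest : Type
  | pt (j : ℕ) : HDest
  | wall0 : HDest
  | wall1 : HDest
  | prop : HDest
deriving DecidableEq

/-- A half diagram on `m` northern vertices (the right-hand fundamental part of an
affine symmetric diagram). -/
structure HalfDiagram (m : ℕ) : Type where
  dest : ℕ → HDest

/-- Well-formedness (planarity) of a half diagram: cups are involutive and
non-crossing, every point under a cup is paired under that cup, and wall exits and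
propagating lines are compatible with planarity of the strip: `0`-wall exits lie to
the left of propagating lines, which lie to the left of `1`-wall exits. -/
def HWf (m : ℕ) (h : HalfDiagram m) : Prop :=
  (∀ i, m ≤ i → h.dest i = HDest.pt i) ∧
  (∀ i j, i < m → h.dest i = HDest.pt j → j < m ∧ j ≠ i ∧ h.dest j = HDest.pt i) ∧
  (∀ i j c, i < m → h.dest i = HDest.pt j → i < c → c < j →
    ∃ d, h.dest c = HDest.pt d ∧ i < d ∧ d < j) ∧
  (∀ i j, i < m → j < m → h.dest i = HDest.wall0 → h.dest j = HDest.prop → i < j) ∧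
  (∀ i j, i < m → j < m → h.dest i = HDest.prop → h.dest j = HDest.wall1 → i < j) ∧
  (∀ i j, i < m → j < m → h.dest i = HDest.wall0 → h.dest j = HDest.wall1 → i < j)

/-! Deleting the last vertex `m` of a diagram on `m + 1` vertices leaves a diagram on `m`
vertices, in which the former partner `c` of `m` (if any) becomes a `1`-wall exit. Conversely,
planarity leaves exactly two ways to re-attach `m`: as a `1`-wall exit, or joined to the rightmost
`1`-wall exit (through the `0`-wall if there is none). So diagrams without propagating lines on
`m + 1` vertices correspond to pairs (such a diagram on `m` vertices, a bit), and there are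
`2 ^ m` of them. -/

namespace HalfDiagram

-- The basis `B^φ_{2m}[0]` of `S₀(2m)`: diagrams with no defects, i.e. no propagating lines.
def IsNoDefect (m : ℕ) (h : HalfDiagram m) : Prop :=
  HWf m h ∧ ∀ i, i < m → h.dest i ≠ HDest.prop

abbrev NoDefect (m : ℕ) : Type := {h : HalfDiagram m // IsNoDefect m h}

variable {m : ℕ}

def snoc (h : HalfDiagram m) (d : HDest) : HalfDiagram (m + 1) :=
  ⟨fun i => if i = m then d else h.dest i⟩

def link (h : HalfDiagram m) (c : ℕ) : HalfDiagram (m + 1) :=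
  ⟨fun i => if i = m then .pt c else if i = c then .pt m else h.dest i⟩

def dropLast (h : HalfDiagram (m + 1)) : HalfDiagram m :=
  ⟨fun i => if i = m then .pt m else if h.dest i = .pt m then .wall1 else h.dest i⟩

def IsLastWall1 (h : HalfDiagram m) (c : ℕ) : Prop :=
  (c < m ∧ h.dest c = .wall1) ∧ ∀ j, c < j → j < m → h.dest j ≠ .wall1

open Classical in
noncomputable def closeLast (h : HalfDiagram m) : HalfDiagram (m + 1) :=
  if ∃ c < m, h.dest c = .wall1 then
    h.link (Nat.findGreatest (fun c => c < m ∧ h.dest c = .wall1) m)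
  else h.snoc .wall0

noncomputable def extend (h : HalfDiagram m) : Bool → HalfDiagram (m + 1)
  | true => h.snoc .wall1
  | false => h.closeLast

theorem ext_dest {h₁ h₂ : HalfDiagram m} (hd : ∀ i, h₁.dest i = h₂.dest i) :
    h₁ = h₂ := by
  cases h₁; cases h₂; simp only [mk.injEq]; exact funext hd

variable {h : HalfDiagram m}

theorem dest_symm (hw : HWf m h) {i j : ℕ} (hij : h.dest i = .pt j) : h.dest j = .pt i := by
  rcases lt_or_ge i m with hi | hi
  · exact (hw.2.1 i j hi hij).2.2
  · obtain rfl : i = j := HDest.pt.inj ((hw.1 i hi).symm.trans hij)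
    exact hij

theorem dest_ne_pt_of_ne (hw : HWf m h) {i : ℕ} (hi : i ≠ m) : h.dest i ≠ .pt m := fun hd =>
  hi (HDest.pt.inj ((dest_symm hw hd).symm.trans (hw.1 m le_rfl)))

theorem IsLastWall1.findGreatest_eq {c : ℕ} (hc : h.IsLastWall1 c) :
    Nat.findGreatest (fun j => j < m ∧ h.dest j = .wall1) m = c :=
  Nat.findGreatest_eq_iff.2 ⟨hc.1.1.le, fun _ => hc.1, fun j hcj _ hj => hc.2 j hcj hj.1 hj.2⟩

theorem isLastWall1_findGreatest (hex : ∃ c < m, h.dest c = .wall1) :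
    h.IsLastWall1 (Nat.findGreatest (fun j => j < m ∧ h.dest j = .wall1) m) := by
  obtain ⟨c, hcm, hc⟩ := hex
  exact ⟨Nat.findGreatest_spec (P := fun j => j < m ∧ h.dest j = .wall1) hcm.le ⟨hcm, hc⟩,
    fun j hj hjm hjw => Nat.findGreatest_is_greatest hj hjm.le ⟨hjm, hjw⟩⟩

theorem IsLastWall1.exists_pt_of_lt (hn : IsNoDefect m h) {c t : ℕ} (hc : h.IsLastWall1 c)
    (hct : c < t) (htm : t < m) : ∃ d, h.dest t = .pt d ∧ c < d ∧ d < m := by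
  obtain ⟨⟨-, hsymm, hnest, -, -, hwall⟩, hnp⟩ := hn
  obtain ⟨⟨hcm, hcw⟩, hlast⟩ := hc
  rcases hdt : h.dest t with d | _ | _ | _
  · obtain ⟨hdm, -, htd⟩ := hsymm t d htm hdt
    refine ⟨d, rfl, ?_, hdm⟩
    by_contra! hdc
    rcases hdc.lt_or_eq with hdc | rfl
    · obtain ⟨e, he, -⟩ := hnest d t c hdm htd hdc hct
      simp [hcw] at he
    · simp [hcw] at htd
  · exact absurd (hwall t c htm hcm hdt hcw) (by omega)
  · exact absurd hdt (hlast t hct htm)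
  · exact absurd hdt (hnp t htm)

theorem IsLastWall1.closeLast_eq {c : ℕ} (hc : h.IsLastWall1 c) : h.closeLast = h.link c := by
  rw [closeLast, if_pos ⟨c, hc.1⟩, hc.findGreatest_eq]

theorem closeLast_of_forall_ne (hno : ∀ c < m, h.dest c ≠ .wall1) :
    h.closeLast = h.snoc .wall0 := by
  rw [closeLast, if_neg (by simpa using hno)]

theorem isNoDefect_snoc_wall1 (hn : IsNoDefect m h) : IsNoDefect (m + 1) (h.snoc .wall1) := by
  unfold IsNoDefect HWf at *
  simp only [snoc]
  grind

theorem isNoDefect_snoc_wall0 (hn : IsNoDefect m h) (hno : ∀ c < m, h.dest c ≠ .wall1) :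
    IsNoDefect (m + 1) (h.snoc .wall0) := by
  unfold IsNoDefect HWf at *
  simp only [snoc]
  grind

theorem isNoDefect_link (hn : IsNoDefect m h) {c : ℕ} (hc : h.IsLastWall1 c) :
    IsNoDefect (m + 1) (h.link c) := by
  -- the one non-routine clause: the new cup `(c, m)` encloses only cups
  have hinner := fun t => hc.exists_pt_of_lt hn (t := t)
  obtain ⟨⟨hge, hsymm, hnest, -, -, hwall⟩, hnp⟩ := hn
  obtain ⟨⟨hcm, hcw⟩, hlast⟩ := hc
  refine ⟨⟨?_, ?_, ?_, ?_, ?_, ?_⟩, ?_⟩ <;> simp only [link] <;> grind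

theorem isNoDefect_closeLast (hn : IsNoDefect m h) : IsNoDefect (m + 1) h.closeLast := by
  unfold closeLast
  split_ifs with hex
  · exact isNoDefect_link hn (isLastWall1_findGreatest hex)
  · push Not at hex
    exact isNoDefect_snoc_wall0 hn hex

theorem isNoDefect_extend (hn : IsNoDefect m h) (b : Bool) : IsNoDefect (m + 1) (h.extend b) := by
  cases b
  · exact isNoDefect_closeLast hn
  · exact isNoDefect_snoc_wall1 hn

theorem isNoDefect_dropLast {h : HalfDiagram (m + 1)} (hn : IsNoDefect (m + 1) h) :
    IsNoDefect m h.dropLast := by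
  -- a `0`-wall exit cannot lie under the cup ending at `m`, so it precedes the new `1`-wall exit
  obtain ⟨⟨hge, hsymm, hnest, -, -, hwall⟩, hnp⟩ := hn
  refine ⟨⟨?_, ?_, ?_, ?_, ?_, ?_⟩, ?_⟩ <;> simp only [dropLast] <;> grind

theorem dropLast_snoc (hw : HWf m h) (d : HDest) : (h.snoc d).dropLast = h :=
  ext_dest fun i => by
    by_cases hi : i = m
    · simp [dropLast, hi, hw.1 m le_rfl]
    · simp [dropLast, snoc, hi, dest_ne_pt_of_ne hw hi]

theorem dropLast_link (hw : HWf m h) {c : ℕ} (hc : h.dest c = .wall1) : (h.link c).dropLast = h :=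
  ext_dest fun i => by
    by_cases hi : i = m
    · simp [dropLast, hi, hw.1 m le_rfl]
    · by_cases hic : i = c
      · subst hic
        simp [dropLast, link, hi, hc]
      · simp [dropLast, link, hi, hic, dest_ne_pt_of_ne hw hi]

theorem dropLast_extend (hw : HWf m h) (b : Bool) : (h.extend b).dropLast = h := by
  cases b
  · unfold extend closeLast
    split_ifs with hex
    · exact dropLast_link hw (isLastWall1_findGreatest hex).1.2
    · exact dropLast_snoc hw _
  · exact dropLast_snoc hw _

theorem decide_extend_dest_last (b : Bool) : decide ((h.extend b).dest m = .wall1) = b := by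
  cases b
  · unfold extend closeLast
    split_ifs <;> simp [link, snoc]
  · simp [extend, snoc]

section Succ

variable {h : HalfDiagram (m + 1)}

theorem snoc_dropLast (hw : HWf (m + 1) h) (hm : ∀ c, h.dest m ≠ .pt c) :
    h.dropLast.snoc (h.dest m) = h :=
  ext_dest fun i => by
    by_cases hi : i = m
    · simp [snoc, hi]
    · have : h.dest i ≠ .pt m := fun hd => hm i (dest_symm hw hd)
      simp [snoc, dropLast, hi, this]

theorem link_dropLast (hw : HWf (m + 1) h) {c : ℕ} (hc : h.dest m = .pt c) :
    h.dropLast.link c = h :=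
  ext_dest fun i => by
    by_cases hi : i = m
    · simp [link, hi, hc]
    · by_cases hic : i = c
      · simp [link, hic, dest_symm hw hc]
      · have : h.dest i ≠ .pt m := fun hd => hic (HDest.pt.inj ((dest_symm hw hd).symm.trans hc))
        simp [link, dropLast, hi, hic, this]

theorem isLastWall1_dropLast (hw : HWf (m + 1) h) {c : ℕ} (hc : h.dest m = .pt c) :
    h.dropLast.IsLastWall1 c := by
  obtain ⟨-, hsymm, hnest, -⟩ := hw
  obtain ⟨hcm, hcm', hmc⟩ := hsymm m c (by omega) hc
  refine ⟨⟨by omega, by simp [dropLast, hcm', hmc]⟩, fun j hcj hjm => ?_⟩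
  obtain ⟨d, hjd, -, hdm⟩ := hnest c m j hcm hmc hcj hjm
  simp [dropLast, hjm.ne, hjd, hdm.ne]

theorem dropLast_ne_wall1 (hw : HWf (m + 1) h) (hm : h.dest m = .wall0) {j : ℕ} (hj : j < m) :
    h.dropLast.dest j ≠ .wall1 := by
  have hjm : h.dest j ≠ .pt m := fun hd => by simp [dest_symm hw hd] at hm
  obtain ⟨-, -, -, -, -, hwall⟩ := hw
  have hjw : h.dest j ≠ .wall1 := fun hd =>
    absurd (hwall m j (by omega) (by omega) hm hd) (by omega)
  simp [dropLast, hj.ne, hjm, hjw]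

theorem extend_dropLast (hn : IsNoDefect (m + 1) h) :
    h.dropLast.extend (decide (h.dest m = .wall1)) = h := by
  rcases hm : h.dest m with c | _ | _ | _
  · rw [decide_eq_false (by simp), extend,
      (isLastWall1_dropLast hn.1 hm).closeLast_eq, link_dropLast hn.1 hm]
  · rw [decide_eq_false (by simp), extend,
      closeLast_of_forall_ne (fun j hj => dropLast_ne_wall1 hn.1 hm hj), ← hm,
      snoc_dropLast hn.1 (by simp [hm])]
  · rw [decide_eq_true rfl, extend, ← hm, snoc_dropLast hn.1 (by simp [hm])]
  · exact absurd hm (hn.2 m (by omega))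

end Succ

instance : Unique (NoDefect 0) where
  default := ⟨⟨HDest.pt⟩, ⟨fun _ _ => rfl, by simp⟩, by simp⟩
  uniq h := Subtype.ext (ext_dest fun i => h.2.1.1 i (Nat.zero_le i))

noncomputable def noDefectSuccEquiv (m : ℕ) : NoDefect (m + 1) ≃ NoDefect m × Bool where
  toFun h := (⟨h.1.dropLast, isNoDefect_dropLast h.2⟩, decide (h.1.dest m = .wall1))
  invFun p := ⟨p.1.1.extend p.2, isNoDefect_extend p.1.2 p.2⟩
  left_inv h := Subtype.ext (extend_dropLast h.2)
  right_inv := fun ⟨h, b⟩ =>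
    Prod.ext (Subtype.ext (dropLast_extend h.2.1 b)) (decide_extend_dest_last b)

theorem card_noDefect : ∀ m, Nat.card (NoDefect m) = 2 ^ m
  | 0 => Nat.card_unique
  | m + 1 => by
    rw [Nat.card_congr (noDefectSuccEquiv m), Nat.card_prod, card_noDefect m,
      Nat.card_eq_fintype_card (α := Bool), Fintype.card_bool, pow_succ]

end HalfDiagram

theorem stmt17 (m : ℕ) (k V : Type) [Field k] [AddCommGroup V] [Module k V]
    (b : Module.Basis {h : HalfDiagram m // HWf m h ∧ ∀ i, i < m → h.dest i ≠ HDest.prop} k V) :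
    Module.finrank k V = 2 ^ m ∧
    Nat.card {h : HalfDiagram m // HWf m h ∧ ∀ i, i < m → h.dest i ≠ HDest.prop}
      = 2 ^ m :=
  ⟨(Module.finrank_eq_nat_card_basis b).trans (HalfDiagram.card_noDefect m),
    HalfDiagram.card_noDefect m⟩
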